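/- Let p ≥ 3 be prime and for each k ∈ N let a_k, b_k, c_k ∈ Q_p satisfy |a_k − 1|_p ≤ 1/p, |b_k − 1|_p ≤ 1/p, |c_k − 1|_p ≤ 1/p, and additionally a_k + b_k = c_k + 1 for all k. Then the constant sequence u_n = 1 satisfies u_n = ((a_{n+1} u_{n+1} + b_{n+1})/(c_{n+1} + u_{n+1})) · ((a_{n+2} u_{n+2} + b_{n+2})/(c_{n+2} + u_{n+2})) for all n ∈ N, and it is the unique solution with values in D = {z : |z|_p = 1, |z − 1|_p ≤ 1/p}. -/

import Mathlib

/-!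
Write `f_k(x) = (a_k x + b_k) / (c_k + x)`. The relation `a_k + b_k = c_k + 1` says `f_k(1) = 1`,
and `f_k(x) - f_k(y) = (a_k c_k - b_k)(x - y) / ((c_k + x)(c_k + y))`. On
`D = {x : |x - 1| ≤ 1/p}` the denominators have norm `|2| = 1` (this is where `p ≠ 2` enters)
and `|a_k c_k - b_k| ≤ 1/p`, so each `f_k` contracts distances to `1` by the factor `1/p`.
By the ultrametric inequality a solution `u` in `D` then satisfies
`|u_n - 1| ≤ (1/p) max(|u_{n+1} - 1|, |u_{n+2} - 1|)`, and iterating gives `|u_n - 1| ≤ p^{-m}`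
for every `m`.
-/

noncomputable def pexp (p : ℕ) [Fact p.Prime] (x : ℚ_[p]) : ℚ_[p] :=
  NormedSpace.exp x

noncomputable def plog (p : ℕ) [Fact p.Prime] (z : ℚ_[p]) : ℚ_[p] :=
  ∑' n : ℕ, (-1) ^ n * (z - 1) ^ (n + 1) / (n + 1)

open Filter IsUltrametricDist

lemma eq_zero_of_le_mul_max_succ {e : ℕ → ℝ} {r B : ℝ} (hr0 : 0 ≤ r) (hr1 : r < 1)
    (he0 : ∀ n, 0 ≤ e n) (heB : ∀ n, e n ≤ B)
    (hstep : ∀ n, e n ≤ r * max (e (n + 1)) (e (n + 2))) (n : ℕ) : e n = 0 := by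
  have hpow : ∀ m n, e n ≤ r ^ m * B := by
    intro m
    induction m with
    | zero => simpa using heB
    | succ m ih =>
      intro n
      calc e n ≤ r * max (e (n + 1)) (e (n + 2)) := hstep n
        _ ≤ r * (r ^ m * B) := by gcongr; exact max_le (ih _) (ih _)
        _ = r ^ (m + 1) * B := by ring
  have hlim : Tendsto (fun m ↦ r ^ m * B) atTop (nhds 0) := by
    simpa using (tendsto_pow_atTop_nhds_zero_of_lt_one hr0 hr1).mul_const B
  exact le_antisymm (ge_of_tendsto' hlim (hpow · n)) (he0 n)

def moebius {K : Type*} [Field K] (a b c x : K) : K := (a * x + b) / (c + x)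

section Field

variable {K : Type*} [Field K] {a b c x y : K}

lemma moebius_sub_moebius (hx : c + x ≠ 0) (hy : c + y ≠ 0) :
    moebius a b c x - moebius a b c y = (a * c - b) * (x - y) / ((c + x) * (c + y)) := by
  unfold moebius
  field_simp
  ring

lemma moebius_one (habc : a + b = c + 1) (hc : c + 1 ≠ 0) : moebius a b c 1 = 1 := by
  rw [moebius, mul_one, habc, div_self hc]

end Field

section Ultrametric

variable {K : Type*} [NormedField K] [IsUltrametricDist K] {a b c x y : K} {r : ℝ}

lemma norm_mul_sub_one_le_max (hx : ‖x - 1‖ ≤ 1) : ‖x * y - 1‖ ≤ max ‖x - 1‖ ‖y - 1‖ := by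
  have hx1 : ‖x‖ ≤ 1 := by
    simpa using (norm_add_le_max (x - 1) 1).trans (max_le hx norm_one.le)
  have hxy : ‖x * (y - 1)‖ ≤ ‖y - 1‖ := by
    rw [norm_mul]
    exact mul_le_of_le_one_left (norm_nonneg _) hx1
  calc ‖x * y - 1‖ = ‖x * (y - 1) + (x - 1)‖ := by ring_nf
    _ ≤ max ‖x - 1‖ ‖y - 1‖ := (norm_add_le_max _ _).trans (max_le (le_max_of_le_right hxy)
        (le_max_left _ _))

lemma norm_add_eq_one_of_norm_sub_one_le (h2 : ‖(2 : K)‖ = 1) (hr : r < 1)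
    (hx : ‖x - 1‖ ≤ r) (hy : ‖y - 1‖ ≤ r) : ‖x + y‖ = 1 := by
  have hsmall : ‖(x - 1) + (y - 1)‖ < ‖(2 : K)‖ :=
    (norm_add_le_max _ _).trans_lt (h2 ▸ max_lt (hx.trans_lt hr) (hy.trans_lt hr))
  rw [show x + y = 2 + ((x - 1) + (y - 1)) by ring, norm_add_eq_max_of_norm_ne_norm hsmall.ne',
    max_eq_left hsmall.le, h2]

lemma norm_mul_sub_le_of_norm_sub_one_le (hr : r ≤ 1) (ha : ‖a - 1‖ ≤ r) (hb : ‖b - 1‖ ≤ r)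
    (hc : ‖c - 1‖ ≤ r) : ‖a * c - b‖ ≤ r := by
  have hac : ‖(a - 1) * (c - 1)‖ ≤ r := by
    rw [norm_mul]
    exact (mul_le_mul ha (hc.trans hr) (norm_nonneg _) ((norm_nonneg _).trans ha)).trans_eq
      (mul_one r)
  rw [show a * c - b = (a - 1) * (c - 1) + (a - 1) + (c - 1) + (1 - b) by ring]
  refine (norm_add_le_max _ _).trans (max_le ?_ (norm_sub_rev 1 b ▸ hb))
  exact (norm_add_le_max _ _).trans (max_le ((norm_add_le_max _ _).trans (max_le hac ha)) hc)

lemma norm_moebius_sub_moebius_le (h2 : ‖(2 : K)‖ = 1) (hr : r < 1) (ha : ‖a - 1‖ ≤ r)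
    (hb : ‖b - 1‖ ≤ r) (hc : ‖c - 1‖ ≤ r) (hx : ‖x - 1‖ ≤ r) (hy : ‖y - 1‖ ≤ r) :
    ‖moebius a b c x - moebius a b c y‖ ≤ r * ‖x - y‖ := by
  have hcx := norm_add_eq_one_of_norm_sub_one_le h2 hr hc hx
  have hcy := norm_add_eq_one_of_norm_sub_one_le h2 hr hc hy
  rw [moebius_sub_moebius (norm_ne_zero_iff.mp (by simp [hcx]))
    (norm_ne_zero_iff.mp (by simp [hcy])), norm_div, norm_mul, norm_mul, hcx, hcy, mul_one,
    div_one]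
  exact mul_le_mul_of_nonneg_right (norm_mul_sub_le_of_norm_sub_one_le hr.le ha hb hc)
    (norm_nonneg _)

lemma norm_moebius_sub_one_le (h2 : ‖(2 : K)‖ = 1) (hr : r < 1) (ha : ‖a - 1‖ ≤ r)
    (hb : ‖b - 1‖ ≤ r) (hc : ‖c - 1‖ ≤ r) (habc : a + b = c + 1) (hx : ‖x - 1‖ ≤ r) :
    ‖moebius a b c x - 1‖ ≤ r * ‖x - 1‖ := by
  have h1 : ‖(1 : K) - 1‖ ≤ r := by simpa using (norm_nonneg _).trans hx
  have hc1 := norm_add_eq_one_of_norm_sub_one_le h2 hr hc h1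
  simpa [moebius_one habc (norm_ne_zero_iff.mp (by simp [hc1]))] using
    norm_moebius_sub_moebius_le h2 hr ha hb hc hx h1

lemma eq_one_of_eq_moebius_mul_moebius {a b c u : ℕ → K} (h2 : ‖(2 : K)‖ = 1) (hr : r < 1)
    (ha : ∀ k, ‖a k - 1‖ ≤ r) (hb : ∀ k, ‖b k - 1‖ ≤ r) (hc : ∀ k, ‖c k - 1‖ ≤ r)
    (habc : ∀ k, a k + b k = c k + 1) (hu : ∀ n, ‖u n - 1‖ ≤ r)
    (hrec : ∀ n, u n = moebius (a (n + 1)) (b (n + 1)) (c (n + 1)) (u (n + 1)) *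
      moebius (a (n + 2)) (b (n + 2)) (c (n + 2)) (u (n + 2))) (n : ℕ) : u n = 1 := by
  have hr0 : 0 ≤ r := (norm_nonneg _).trans (hu 0)
  have hf : ∀ k m, ‖moebius (a k) (b k) (c k) (u m) - 1‖ ≤ r * ‖u m - 1‖ :=
    fun k m ↦ norm_moebius_sub_one_le h2 hr (ha k) (hb k) (hc k) (habc k) (hu m)
  have hstep (n : ℕ) : ‖u n - 1‖ ≤ r * max ‖u (n + 1) - 1‖ ‖u (n + 2) - 1‖ := by
    have hf1 : ‖moebius (a (n + 1)) (b (n + 1)) (c (n + 1)) (u (n + 1)) - 1‖ ≤ 1 :=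
      (hf _ _).trans (mul_le_one₀ hr.le (norm_nonneg _) ((hu _).trans hr.le))
    rw [hrec n, mul_max_of_nonneg _ _ hr0]
    exact (norm_mul_sub_one_le_max hf1).trans (max_le_max (hf _ _) (hf _ _))
  exact sub_eq_zero.mp <| norm_eq_zero.mp <|
    eq_zero_of_le_mul_max_succ hr0 hr (fun _ ↦ norm_nonneg _) hu hstep n

end Ultrametric

theorem stmt12 (p : ℕ) [Fact p.Prime] (hp : 3 ≤ p) (a b c : ℕ → ℚ_[p])
    (ha : ∀ k, ‖a k - 1‖ ≤ (p : ℝ)⁻¹) (hb : ∀ k, ‖b k - 1‖ ≤ (p : ℝ)⁻¹)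
    (hc : ∀ k, ‖c k - 1‖ ≤ (p : ℝ)⁻¹) (habc : ∀ k, a k + b k = c k + 1) :
    (∀ n : ℕ, (1 : ℚ_[p]) =
        ((a (n + 1) * 1 + b (n + 1)) / (c (n + 1) + 1)) *
        ((a (n + 2) * 1 + b (n + 2)) / (c (n + 2) + 1))) ∧
    (∀ u : ℕ → ℚ_[p], (∀ n, ‖u n‖ = 1 ∧ ‖u n - 1‖ ≤ (p : ℝ)⁻¹) →
      (∀ n, u n = ((a (n + 1) * u (n + 1) + b (n + 1)) / (c (n + 1) + u (n + 1))) *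
        ((a (n + 2) * u (n + 2) + b (n + 2)) / (c (n + 2) + u (n + 2)))) →
      ∀ n, u n = 1) := by
  have h2 : ‖(2 : ℚ_[p])‖ = 1 := by
    exact_mod_cast Padic.norm_natCast_eq_one_iff.mpr
      ((Nat.coprime_primes Fact.out Nat.prime_two).mpr (by omega))
  have hr : (p : ℝ)⁻¹ < 1 := inv_lt_one_of_one_lt₀ (by exact_mod_cast (by omega : 1 < p))
  have hf1 (k : ℕ) : moebius (a k) (b k) (c k) 1 = 1 := by
    have hc1 := norm_add_eq_one_of_norm_sub_one_le h2 hr (hc k) (y := 1) (by simp)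
    exact moebius_one (habc k) (norm_ne_zero_iff.mp (by simp [hc1]))
  refine ⟨fun n ↦ ?_, fun u hu hrec ↦
    eq_one_of_eq_moebius_mul_moebius h2 hr ha hb hc habc (fun n ↦ (hu n).2) hrec⟩
  change 1 = moebius _ _ _ 1 * moebius _ _ _ 1
  rw [hf1, hf1, mul_one]
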